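/- arXiv:2009.14140 — 2 statements merged into one kernel-verified Lean document; each statement's English description precedes it below -/
import Mathlib

section
/- There exists a constant c > 0 such that for every integer p ≥ 1 and every real polynomial q in one variable of degree at most p, there exists a twice continuously differentiable function v : ℝ² → ℝ satisfying: (i) v(x,0) = x(1 − x)·q(x) for all x ∈ [0,1]; (ii) (∫_T v²)^{1/2} + p^{−2}·(∫_T ((∂_x v)² + (∂_y v)²))^{1/2} + p^{−4}·(∫_T ((∂_{xx} v)² + 2(∂_{xy} v)² + (∂_{yy} v)²))^{1/2} ≤ c · p^{−1} · (∫_0^1 q(x)² dx)^{1/2}; where T = {(x,y) ∈ ℝ² : x ≥ 0, y ≥ 0, x + y ≤ 1}. -/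
open MeasureTheory

/-- The reference triangle `T = {(x,y) : x ≥ 0, y ≥ 0, x + y ≤ 1}`. -/
def refTriangle : Set (ℝ × ℝ) := {z | 0 ≤ z.1 ∧ 0 ≤ z.2 ∧ z.1 + z.2 ≤ 1}

/-- Partial derivative in the `x` direction. -/
noncomputable def dx (v : ℝ × ℝ → ℝ) (z : ℝ × ℝ) : ℝ := fderiv ℝ v z (1, 0)

/-- Partial derivative in the `y` direction. -/
noncomputable def dy (v : ℝ × ℝ → ℝ) (z : ℝ × ℝ) : ℝ := fderiv ℝ v z (0, 1)

/-!
The extension is `v(x, y) = φ(x) e^{-p² y}` with `φ(x) = x (1 - x) q(x)`. Integrating out `y`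
over the half-strip `[0,1] × [0,∞)`, which contains `T`, bounds `∫_T v²` by `‖φ‖² / (2p²)`; each
`y`-derivative costs a factor `p²`, and each `x`-derivative is paid for by the `L²(0,1)` Markov
inequality `‖r'‖² ≤ 4 (n+1)⁴ ‖r‖²` for `deg r ≤ n`, applied with `n = p + 2`. Finally
`‖φ‖ ≤ ‖q‖` because `0 ≤ x (1 - x) ≤ 1` on `[0,1]`.

The Markov inequality follows by expanding `r = ∑ cₖ Lₖ` in shifted Legendre polynomials, which
are orthogonal with `‖Lₖ‖² = 1 / (2k+1)` and `‖Lₖ'‖² = 2k(k+1)`, and bounding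
`‖∑ cₖ Lₖ'‖² ≤ (n+1) ∑ cₖ² ‖Lₖ'‖²`.
-/

open Polynomial Set

namespace TriangleExtension

/-- For a positive functional `Λ`, this is `‖∑ uᵢ‖² ≤ #s ∑ ‖uᵢ‖²` for the seminorm
`‖a‖² = Λ (a * a)`. -/
lemma map_sum_mul_sum_le_card_mul {ι A R : Type*} [CommRing A] [Field R] [LinearOrder R]
    [IsStrictOrderedRing R] (Λ : A →+ R) (hΛ : ∀ a, 0 ≤ Λ (a * a)) (s : Finset ι)
    (u : ι → A) :
    Λ ((∑ i ∈ s, u i) * ∑ i ∈ s, u i) ≤ s.card * ∑ i ∈ s, Λ (u i * u i) := by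
  have hcross : ∀ i j, Λ (u i * u j) ≤ (Λ (u i * u i) + Λ (u j * u j)) / 2 := by
    intro i j
    have h := hΛ (u i - u j)
    rw [show (u i - u j) * (u i - u j) = u i * u i + u j * u j - (u i * u j + u i * u j) by ring,
      map_sub, map_add, map_add] at h
    linarith
  calc Λ ((∑ i ∈ s, u i) * ∑ i ∈ s, u i) = ∑ i ∈ s, ∑ j ∈ s, Λ (u i * u j) := by
        simp only [Finset.sum_mul_sum, map_sum]
    _ ≤ ∑ i ∈ s, ∑ j ∈ s, (Λ (u i * u i) + Λ (u j * u j)) / 2 :=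
        Finset.sum_le_sum fun i _ => Finset.sum_le_sum fun j _ => hcross i j
    _ = s.card * ∑ i ∈ s, Λ (u i * u i) := by
        simp only [← Finset.sum_div, Finset.sum_add_distrib, Finset.sum_const, nsmul_eq_mul,
          ← Finset.mul_sum]
        ring

noncomputable def unitIntegral : ℝ[X] →ₗ[ℝ] ℝ where
  toFun f := ∫ x in (0 : ℝ)..1, f.eval x
  map_add' f g := by
    simp only [eval_add]
    exact intervalIntegral.integral_add (f.continuous.intervalIntegrable _ _)
      (g.continuous.intervalIntegrable _ _)
  map_smul' c f := by simp [intervalIntegral.integral_const_mul]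

lemma unitIntegral_apply (f : ℝ[X]) : unitIntegral f = ∫ x in (0 : ℝ)..1, f.eval x := rfl

lemma unitIntegral_derivative (f : ℝ[X]) : unitIntegral (derivative f) = f.eval 1 - f.eval 0 :=
  intervalIntegral.integral_eq_sub_of_hasDerivAt (fun x _ => f.hasDerivAt x)
    ((derivative f).continuous.intervalIntegrable _ _)

lemma unitIntegral_derivative_mul (f g : ℝ[X]) :
    unitIntegral (derivative f * g) =
      f.eval 1 * g.eval 1 - f.eval 0 * g.eval 0 - unitIntegral (f * derivative g) := by
  have h := unitIntegral_derivative (f * g)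
  rw [derivative_mul, map_add, eval_mul, eval_mul] at h
  linarith

lemma unitIntegral_mono {f g : ℝ[X]} (h : ∀ x ∈ Icc (0 : ℝ) 1, f.eval x ≤ g.eval x) :
    unitIntegral f ≤ unitIntegral g :=
  intervalIntegral.integral_mono_on zero_le_one (f.continuous.intervalIntegrable _ _)
    (g.continuous.intervalIntegrable _ _) h

lemma unitIntegral_nonneg {f : ℝ[X]} (h : ∀ x ∈ Icc (0 : ℝ) 1, 0 ≤ f.eval x) :
    0 ≤ unitIntegral f := by
  simpa using unitIntegral_mono (f := 0) (by simpa using h)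

lemma unitIntegral_mul_self_nonneg (f : ℝ[X]) : 0 ≤ unitIntegral (f * f) :=
  unitIntegral_nonneg fun x _ => by simpa using mul_self_nonneg (f.eval x)

noncomputable def legendre (k : ℕ) : ℝ[X] := (shiftedLegendre k).map (Int.castRingHom ℝ)

lemma degree_legendre (k : ℕ) : (legendre k).degree = k := by
  rw [legendre, degree_map_eq_of_injective (RingHom.injective_int _), degree_shiftedLegendre]

lemma natDegree_legendre (k : ℕ) : (legendre k).natDegree = k :=
  natDegree_eq_of_degree_eq_some (degree_legendre k)

lemma factorial_mul_legendre (k : ℕ) :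
    (k.factorial : ℝ[X]) * legendre k = derivative^[k] (X ^ k * (1 - X) ^ k) := by
  have h := congrArg (map (Int.castRingHom ℝ)) (factorial_mul_shiftedLegendre_eq k)
  rw [← iterate_derivative_map] at h
  simpa [legendre] using h

lemma neg_one_pow_mul_legendre_comp_one_sub_X (k : ℕ) :
    (-1) ^ k * (legendre k).comp (1 - X) = legendre k := by
  simpa [legendre, map_comp] using
    congrArg (map (Int.castRingHom ℝ)) (neg_one_pow_mul_shiftedLegendre_comp_one_sub_X_eq k)

lemma legendre_eval_zero (k : ℕ) : (legendre k).eval 0 = 1 := by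
  simp [← coeff_zero_eq_eval_zero, legendre, coeff_shiftedLegendre]

lemma derivative_legendre_eval_zero (k : ℕ) :
    (derivative (legendre k)).eval 0 = -(k * (k + 1)) := by
  simp [← coeff_zero_eq_eval_zero, coeff_derivative, legendre, coeff_shiftedLegendre,
    Nat.choose_succ_self_right]

lemma legendre_eval_one (k : ℕ) : (legendre k).eval 1 = (-1) ^ k := by
  simpa [eval_comp, legendre_eval_zero] using
    (congrArg (eval 1) (neg_one_pow_mul_legendre_comp_one_sub_X k)).symm

lemma derivative_legendre_eval_one (k : ℕ) :
    (derivative (legendre k)).eval 1 = (-1) ^ k * (k * (k + 1)) := by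
  nth_rewrite 1 [← neg_one_pow_mul_legendre_comp_one_sub_X k]
  simp [derivative_comp, derivative_pow, derivative_legendre_eval_zero]

lemma eval_iterate_derivative_eq_zero_of_pow_dvd {R : Type*} [CommRing R] {p q : R[X]} {a : R}
    {k j : ℕ} (hq : q.eval a = 0) (h : q ^ k ∣ p) (hj : j < k) :
    (derivative^[j] p).eval a = 0 := by
  obtain ⟨g, hg⟩ := pow_sub_dvd_iterate_derivative_of_pow_dvd j h
  rw [hg, eval_mul, eval_pow, hq, zero_pow (by omega), zero_mul]

lemma unitIntegral_mul_iterate_derivative (f g : ℝ[X]) (m : ℕ)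
    (hg : ∀ j < m, (derivative^[j] g).eval 0 = 0 ∧ (derivative^[j] g).eval 1 = 0) :
    unitIntegral (f * derivative^[m] g) = (-1) ^ m * unitIntegral (derivative^[m] f * g) := by
  induction m generalizing f with
  | zero => simp
  | succ m ih =>
    obtain ⟨h0, h1⟩ := hg m m.lt_succ_self
    rw [Function.iterate_succ_apply', mul_comm, unitIntegral_derivative_mul, h0, h1,
      mul_comm _ (derivative f),
      ih (derivative f) fun j hj => hg j (by omega), ← Function.iterate_succ_apply]
    ring

lemma unitIntegral_mul_legendre_eq_zero {f : ℝ[X]} {k : ℕ} (hf : f.degree < k) :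
    unitIntegral (f * legendre k) = 0 := by
  have hB : ∀ j < k, (derivative^[j] (X ^ k * (1 - X) ^ k : ℝ[X])).eval 0 = 0 ∧
      (derivative^[j] (X ^ k * (1 - X) ^ k : ℝ[X])).eval 1 = 0 := fun j hj =>
    ⟨eval_iterate_derivative_eq_zero_of_pow_dvd (q := X) (by simp) (dvd_mul_right _ _) hj,
      eval_iterate_derivative_eq_zero_of_pow_dvd (q := 1 - X) (by simp) (dvd_mul_left _ _) hj⟩
  have h := unitIntegral_mul_iterate_derivative f _ k hB
  rw [iterate_derivative_eq_zero_of_degree_lt hf, zero_mul, map_zero, mul_zero,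
    ← factorial_mul_legendre, ← C_eq_natCast, mul_left_comm, ← smul_eq_C_mul, map_smul,
    smul_eq_mul] at h
  exact (mul_eq_zero.mp h).resolve_left (by positivity)

lemma unitIntegral_legendre_mul_legendre {j k : ℕ} (h : j ≠ k) :
    unitIntegral (legendre j * legendre k) = 0 := by
  rcases h.lt_or_gt with h | h
  · exact unitIntegral_mul_legendre_eq_zero (by rw [degree_legendre]; exact_mod_cast h)
  · rw [mul_comm]
    exact unitIntegral_mul_legendre_eq_zero (by rw [degree_legendre]; exact_mod_cast h)

lemma degree_X_mul_derivative_sub_lt {f : ℝ[X]} {k : ℕ} (hf : f.natDegree ≤ k) :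
    (X * derivative f - C (k : ℝ) * f).degree < (k : WithBot ℕ) := by
  rw [degree_lt_iff_coeff_zero]
  rintro (_ | m) hm
  · obtain rfl : k = 0 := by omega
    simp
  · rw [coeff_sub, coeff_X_mul, coeff_derivative, coeff_C_mul]
    rcases hm.lt_or_eq with hm | rfl
    · simp [coeff_eq_zero_of_natDegree_lt (hf.trans_lt hm)]
    · push_cast
      ring

-- Integrate `x (L²)'` by parts: `x L' - k L` has degree `< k`, so it is orthogonal to `L`, and
-- `(2k + 1) ‖L‖² = L(1)² = 1`.
lemma unitIntegral_legendre_mul_self (k : ℕ) :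
    unitIntegral (legendre k * legendre k) = 1 / (2 * k + 1) := by
  have hibp := unitIntegral_derivative_mul X (legendre k * legendre k)
  have horth := unitIntegral_mul_legendre_eq_zero
    (degree_X_mul_derivative_sub_lt (natDegree_legendre k).le)
  have hsplit : X * derivative (legendre k * legendre k) =
      (2 : ℝ) • ((X * derivative (legendre k) - C (k : ℝ) * legendre k) * legendre k) +
        (2 * k : ℝ) • (legendre k * legendre k) := by
    simp only [derivative_mul, smul_eq_C_mul, C_mul, C_ofNat]
    ring
  rw [hsplit, map_add, map_smul, map_smul, horth] at hibp
  simp only [derivative_X, one_mul, eval_X, eval_mul, legendre_eval_one, smul_eq_mul] at hibp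
  have h1 : ((-1 : ℝ) ^ k) * (-1) ^ k = 1 := by rw [← mul_pow]; norm_num
  field_simp
  linear_combination hibp + h1

lemma unitIntegral_derivative_legendre_mul_self (k : ℕ) :
    unitIntegral (derivative (legendre k) * derivative (legendre k)) = 2 * k * (k + 1) := by
  have horth : unitIntegral (derivative (derivative (legendre k)) * legendre k) = 0 := by
    refine unitIntegral_mul_legendre_eq_zero ?_
    rw [degree_lt_iff_coeff_zero]
    intro m hm
    simp [coeff_derivative, coeff_eq_zero_of_natDegree_lt
      ((natDegree_legendre k).trans_lt (by omega : k < m + 1 + 1))]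
  rw [unitIntegral_derivative_mul, mul_comm (legendre k), horth, legendre_eval_one,
    legendre_eval_zero, derivative_legendre_eval_one, derivative_legendre_eval_zero]
  have h1 : ((-1 : ℝ) ^ k) * (-1) ^ k = 1 := by rw [← mul_pow]; norm_num
  linear_combination (k * (k + 1) : ℝ) * h1

section LegendreExpansion

open Finset

lemma exists_sum_smul_legendre {r : ℝ[X]} {n : ℕ} (hr : r.natDegree ≤ n) :
    ∃ c : ℕ → ℝ, ∑ k ∈ range (n + 1), c k • legendre k = r := by
  let S : Sequence ℝ := ⟨legendre, degree_legendre⟩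
  have hspan := S.span_degreeLT (m := n + 1) fun i _ =>
    isUnit_iff_ne_zero.mpr (leadingCoeff_ne_zero.mpr (S.ne_zero i))
  have hr' : r ∈ degreeLT ℝ (n + 1) := by
    rw [mem_degreeLT]
    exact (degree_le_of_natDegree_le hr).trans_lt (by exact_mod_cast n.lt_succ_self)
  rw [← hspan, ← coe_range] at hr'
  exact (Submodule.mem_span_image_finset_iff_exists_fun' ℝ).mp hr'

lemma unitIntegral_sum_smul_legendre_mul_self (c : ℕ → ℝ) (n : ℕ) :
    unitIntegral ((∑ k ∈ range n, c k • legendre k) * ∑ k ∈ range n, c k • legendre k) =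
      ∑ k ∈ range n, c k ^ 2 / (2 * k + 1) := by
  rw [sum_mul_sum, map_sum]
  refine sum_congr rfl fun j hj => ?_
  rw [map_sum, sum_eq_single j]
  · rw [smul_mul_smul_comm, map_smul, unitIntegral_legendre_mul_self, smul_eq_mul]
    ring
  · intro k _ hkj
    rw [smul_mul_smul_comm, map_smul, unitIntegral_legendre_mul_legendre hkj.symm, smul_zero]
  · exact fun h => absurd hj h

theorem unitIntegral_derivative_mul_self_le {r : ℝ[X]} {n : ℕ} (hr : r.natDegree ≤ n) :
    unitIntegral (derivative r * derivative r) ≤ 4 * (n + 1) ^ 4 * unitIntegral (r * r) := by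
  obtain ⟨c, rfl⟩ := exists_sum_smul_legendre hr
  have htriangle := map_sum_mul_sum_le_card_mul unitIntegral.toAddMonoidHom
    unitIntegral_mul_self_nonneg (range (n + 1)) fun k => c k • derivative (legendre k)
  have hterm : ∀ k ∈ range (n + 1),
      c k ^ 2 * (2 * k * (k + 1)) ≤ 4 * (n + 1) ^ 3 * (c k ^ 2 / (2 * k + 1)) := by
    intro k hk
    have hkn : (k : ℝ) ≤ n := by exact_mod_cast Nat.lt_succ_iff.mp (mem_range.mp hk)
    rw [mul_div_assoc', le_div_iff₀ (by positivity)]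
    have hratio : 2 * (k : ℝ) * (k + 1) * (2 * k + 1) ≤ 4 * (n + 1) ^ 3 := by
      have hk0 : (0 : ℝ) ≤ k := k.cast_nonneg
      calc 2 * (k : ℝ) * (k + 1) * (2 * k + 1) ≤ 2 * (n + 1) * (n + 1) * (2 * (n + 1)) := by
            gcongr <;> linarith
        _ = 4 * (n + 1) ^ 3 := by ring
    nlinarith [mul_le_mul_of_nonneg_left hratio (sq_nonneg (c k))]
  rw [unitIntegral_sum_smul_legendre_mul_self]
  calc unitIntegral (derivative (∑ k ∈ range (n + 1), c k • legendre k) *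
        derivative (∑ k ∈ range (n + 1), c k • legendre k))
      ≤ (n + 1) * ∑ k ∈ range (n + 1), c k ^ 2 * (2 * k * (k + 1)) := by
        simpa [map_sum, smul_mul_smul_comm, unitIntegral_derivative_legendre_mul_self, sq,
          mul_assoc] using htriangle
    _ ≤ (n + 1) * ∑ k ∈ range (n + 1), 4 * (n + 1) ^ 3 * (c k ^ 2 / (2 * k + 1)) :=
        mul_le_mul_of_nonneg_left (sum_le_sum hterm) (by positivity)
    _ = 4 * (n + 1) ^ 4 * ∑ k ∈ range (n + 1), c k ^ 2 / (2 * k + 1) := by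
        rw [← mul_sum]
        ring

end LegendreExpansion

noncomputable def expExtension (f : ℝ[X]) (κ : ℝ) (z : ℝ × ℝ) : ℝ :=
  f.eval z.1 * Real.exp (-κ * z.2)

lemma contDiff_expExtension (f : ℝ[X]) (κ : ℝ) {n : WithTop ℕ∞} :
    ContDiff ℝ n (expExtension f κ) :=
  ((f.contDiff_aeval n).comp contDiff_fst).mul
    (Real.contDiff_exp.comp (contDiff_const.mul contDiff_snd))

lemma hasFDerivAt_expExtension (f : ℝ[X]) (κ : ℝ) (z : ℝ × ℝ) :
    HasFDerivAt (expExtension f κ)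
      (f.eval z.1 • (Real.exp (-κ * z.2) * -κ) • ContinuousLinearMap.snd ℝ ℝ ℝ +
        Real.exp (-κ * z.2) • (derivative f).eval z.1 • ContinuousLinearMap.fst ℝ ℝ ℝ) z := by
  have hexp : HasDerivAt (fun y : ℝ => Real.exp (-κ * y)) (Real.exp (-κ * z.2) * -κ) z.2 := by
    simpa using ((hasDerivAt_id z.2).const_mul (-κ)).exp
  exact ((f.hasDerivAt z.1).comp_hasFDerivAt z hasFDerivAt_fst).mul
    (hexp.comp_hasFDerivAt z hasFDerivAt_snd)

lemma dx_expExtension (f : ℝ[X]) (κ : ℝ) :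
    dx (expExtension f κ) = expExtension (derivative f) κ := by
  ext z
  simp [dx, (hasFDerivAt_expExtension f κ z).fderiv, expExtension, mul_comm]

lemma dy_expExtension (f : ℝ[X]) (κ : ℝ) :
    dy (expExtension f κ) = expExtension (-κ • f) κ := by
  ext z
  simp [dy, (hasFDerivAt_expExtension f κ z).fderiv, expExtension, mul_comm, mul_left_comm,
    mul_assoc]

lemma expExtension_sq (f : ℝ[X]) (κ : ℝ) (z : ℝ × ℝ) :
    expExtension f κ z ^ 2 = (f * f).eval z.1 * Real.exp (-(2 * κ) * z.2) := by
  rw [expExtension, eval_mul, mul_pow, sq, sq, ← Real.exp_add]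
  ring_nf

lemma setIntegral_Icc_eq_unitIntegral (f : ℝ[X]) :
    ∫ x in Icc (0 : ℝ) 1, f.eval x = unitIntegral f := by
  rw [integral_Icc_eq_integral_Ioc, ← intervalIntegral.integral_of_le zero_le_one,
    unitIntegral_apply]

lemma refTriangle_subset : refTriangle ⊆ Icc (0 : ℝ) 1 ×ˢ Ici (0 : ℝ) :=
  fun _ ⟨hx, hy, hxy⟩ => ⟨⟨hx, by linarith⟩, hy⟩

lemma setIntegral_refTriangle_eval_mul_exp_le {g : ℝ[X]}
    (hg : ∀ x ∈ Icc (0 : ℝ) 1, 0 ≤ g.eval x) {κ : ℝ} (hκ : 0 < κ) :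
    ∫ z in refTriangle, g.eval z.1 * Real.exp (-κ * z.2) ≤ unitIntegral g / κ := by
  have hprod : volume.restrict (Icc (0 : ℝ) 1 ×ˢ Ici (0 : ℝ)) =
      (volume.restrict (Icc (0 : ℝ) 1)).prod (volume.restrict (Ici (0 : ℝ))) := by
    rw [Measure.prod_restrict, ← Measure.volume_eq_prod]
  have hexp : IntegrableOn (fun y : ℝ => Real.exp (-κ * y)) (Ici 0) :=
    Iff.mpr integrableOn_Ici_iff_integrableOn_Ioi (exp_neg_integrableOn_Ioi 0 hκ)
  have hint : IntegrableOn (fun z : ℝ × ℝ => g.eval z.1 * Real.exp (-κ * z.2))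
      (Icc 0 1 ×ˢ Ici (0 : ℝ)) := by
    rw [IntegrableOn, hprod]
    exact g.continuous.integrableOn_Icc.mul_prod hexp
  calc ∫ z in refTriangle, g.eval z.1 * Real.exp (-κ * z.2)
      ≤ ∫ z in Icc 0 1 ×ˢ Ici (0 : ℝ), g.eval z.1 * Real.exp (-κ * z.2) :=
        setIntegral_mono_set hint
          ((ae_restrict_mem (measurableSet_Icc.prod measurableSet_Ici)).mono
            fun z hz => mul_nonneg (hg z.1 hz.1) (Real.exp_nonneg _))
          refTriangle_subset.eventuallyLE
    _ = (∫ x in Icc (0 : ℝ) 1, g.eval x) * ∫ y in Ici (0 : ℝ), Real.exp (-κ * y) := by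
        rw [hprod]
        exact integral_prod_mul (fun x => g.eval x) fun y => Real.exp (-κ * y)
    _ = unitIntegral g / κ := by
        rw [setIntegral_Icc_eq_unitIntegral, integral_Ici_eq_integral_Ioi,
          integral_exp_mul_Ioi (neg_lt_zero.mpr hκ)]
        simp [div_eq_mul_inv]

lemma integral_sq_expExtension_le (f : ℝ[X]) {κ : ℝ} (hκ : 0 < κ) :
    ∫ z in refTriangle, expExtension f κ z ^ 2 ≤ unitIntegral (f * f) / (2 * κ) := by
  simp_rw [expExtension_sq]
  exact setIntegral_refTriangle_eval_mul_exp_le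
    (fun x _ => by simpa using mul_self_nonneg (f.eval x)) (by positivity)

lemma integral_grad_sq_expExtension_le (f : ℝ[X]) {κ : ℝ} (hκ : 0 < κ) :
    ∫ z in refTriangle, (dx (expExtension f κ) z ^ 2 + dy (expExtension f κ) z ^ 2) ≤
      (unitIntegral (derivative f * derivative f) + κ ^ 2 * unitIntegral (f * f)) / (2 * κ) := by
  have h := setIntegral_refTriangle_eval_mul_exp_le
    (g := derivative f * derivative f + (-κ • f) * (-κ • f))
    (fun x _ => by
      simp only [eval_add, eval_mul]
      exact add_nonneg (mul_self_nonneg _) (mul_self_nonneg _))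
    (by positivity : 0 < 2 * κ)
  convert h using 2
  · ext z
    simp only [dx_expExtension, dy_expExtension, expExtension_sq, eval_add]
    ring
  · simp only [map_add, map_smul, smul_mul_smul_comm, smul_eq_mul]
    ring

lemma integral_hessian_sq_expExtension_le (f : ℝ[X]) {κ : ℝ} (hκ : 0 < κ) :
    ∫ z in refTriangle, (dx (dx (expExtension f κ)) z ^ 2 +
        2 * dx (dy (expExtension f κ)) z ^ 2 + dy (dy (expExtension f κ)) z ^ 2) ≤
      (unitIntegral (derivative (derivative f) * derivative (derivative f)) +
          2 * κ ^ 2 * unitIntegral (derivative f * derivative f) +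
          κ ^ 4 * unitIntegral (f * f)) / (2 * κ) := by
  have h := setIntegral_refTriangle_eval_mul_exp_le
    (g := derivative (derivative f) * derivative (derivative f) +
      (2 : ℝ) • ((-κ • derivative f) * (-κ • derivative f)) +
      (-κ • -κ • f) * (-κ • -κ • f))
    (fun x _ => by
      simp only [eval_add, eval_mul, eval_smul, smul_eq_mul]
      nlinarith [mul_self_nonneg ((derivative (derivative f)).eval x),
        mul_self_nonneg (-κ * (derivative f).eval x), mul_self_nonneg (-κ * (-κ * f.eval x))])
    (by positivity : 0 < 2 * κ)
  convert h using 2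
  · ext z
    simp only [dx_expExtension, dy_expExtension, derivative_smul, expExtension_sq, eval_add,
      eval_smul, smul_eq_mul]
    ring
  · simp only [map_add, map_smul, smul_mul_smul_comm, smul_eq_mul]
    ring

lemma natDegree_bubble_mul_le (q : ℝ[X]) :
    (X * (1 - X) * q).natDegree ≤ q.natDegree + 2 := by
  have hbubble : (X * (1 - X) : ℝ[X]).natDegree ≤ 2 := by compute_degree
  exact natDegree_mul_le.trans (by omega)

lemma unitIntegral_bubble_mul_sq_le (q : ℝ[X]) :
    unitIntegral (X * (1 - X) * q * (X * (1 - X) * q)) ≤ unitIntegral (q * q) := by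
  refine unitIntegral_mono fun x ⟨hx₀, hx₁⟩ => ?_
  simp only [eval_mul, eval_sub, eval_one, eval_X]
  have hbubble : (x * (1 - x)) ^ 2 ≤ 1 :=
    pow_le_one₀ (mul_nonneg hx₀ (sub_nonneg.mpr hx₁)) (by nlinarith)
  nlinarith [mul_le_mul_of_nonneg_right hbubble (mul_self_nonneg (q.eval x))]

lemma sqrt_le_mul_sqrt {A a N : ℝ} (ha : 0 ≤ a) (h : A ≤ a ^ 2 * N) : √A ≤ a * √N := by
  rw [← Real.sqrt_sq ha, ← Real.sqrt_mul (sq_nonneg a)]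
  exact Real.sqrt_le_sqrt h

lemma energy_expExtension_le (φ : ℝ[X]) {p K : ℝ} (hp : 0 < p) (hK : 0 ≤ K)
    (h₁ : unitIntegral (derivative φ * derivative φ) ≤ K * p ^ 4 * unitIntegral (φ * φ))
    (h₂ : unitIntegral (derivative (derivative φ) * derivative (derivative φ)) ≤
      K * p ^ 4 * unitIntegral (derivative φ * derivative φ)) :
    √(∫ z in refTriangle, expExtension φ (p ^ 2) z ^ 2) +
        p ^ (-2 : ℤ) * √(∫ z in refTriangle,
          (dx (expExtension φ (p ^ 2)) z ^ 2 + dy (expExtension φ (p ^ 2)) z ^ 2)) +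
        p ^ (-4 : ℤ) * √(∫ z in refTriangle,
          (dx (dx (expExtension φ (p ^ 2))) z ^ 2 + 2 * dx (dy (expExtension φ (p ^ 2))) z ^ 2 +
            dy (dy (expExtension φ (p ^ 2))) z ^ 2)) ≤
      (2 * K + 3) * p ^ (-1 : ℤ) * √(unitIntegral (φ * φ)) := by
  have hκ : 0 < p ^ 2 := by positivity
  have hN₀ := unitIntegral_mul_self_nonneg φ
  have hb₀ := sqrt_le_mul_sqrt (N := unitIntegral (φ * φ)) (inv_nonneg.mpr hp.le)
    ((integral_sq_expExtension_le φ hκ).trans (by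
      rw [div_le_iff₀ (by positivity)]
      field_simp
      nlinarith))
  have hb₁ := sqrt_le_mul_sqrt (N := unitIntegral (φ * φ)) (by positivity : 0 ≤ (K + 1) * p)
    ((integral_grad_sq_expExtension_le φ hκ).trans (by
      rw [div_le_iff₀ (by positivity)]
      nlinarith [mul_nonneg (mul_nonneg hK (by positivity : (0 : ℝ) ≤ p ^ 6)) hN₀,
        mul_nonneg (by positivity : (0 : ℝ) ≤ p ^ 6) hN₀]))
  have hb₂ := sqrt_le_mul_sqrt (N := unitIntegral (φ * φ)) (by positivity : 0 ≤ (K + 1) * p ^ 3)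
    ((integral_hessian_sq_expExtension_le φ hκ).trans (by
      rw [div_le_iff₀ (by positivity)]
      have h₁' := mul_le_mul_of_nonneg_left h₁ (by positivity : (0 : ℝ) ≤ (K + 2) * p ^ 4)
      nlinarith [mul_nonneg (by positivity : (0 : ℝ) ≤ (K + 1) ^ 2 * p ^ 8) hN₀]))
  calc _ ≤ p⁻¹ * √(unitIntegral (φ * φ)) +
        p ^ (-2 : ℤ) * ((K + 1) * p * √(unitIntegral (φ * φ))) +
        p ^ (-4 : ℤ) * ((K + 1) * p ^ 3 * √(unitIntegral (φ * φ))) := by gcongr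
    _ = (2 * K + 3) * p ^ (-1 : ℤ) * √(unitIntegral (φ * φ)) := by
        simp only [zpow_neg, zpow_ofNat]
        field_simp
        ring

end TriangleExtension

open TriangleExtension Polynomial in
/-- $hp$-polynomial extension stability result on the reference
triangle (Corollary 3.9 of the paper, obtained by choosing ε = p⁻²). -/
theorem extension_stability_triangle_corollary :
    ∃ c : ℝ, 0 < c ∧
      ∀ p : ℕ, 1 ≤ p → ∀ q : Polynomial ℝ, q.natDegree ≤ p →
        ∃ v : ℝ × ℝ → ℝ, ContDiff ℝ 2 v ∧
          (∀ x ∈ Set.Icc (0 : ℝ) 1, v (x, 0) = x * (1 - x) * q.eval x) ∧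
          Real.sqrt (∫ z in refTriangle, (v z) ^ 2) +
              (p : ℝ) ^ (-2 : ℤ) *
                Real.sqrt (∫ z in refTriangle, ((dx v z) ^ 2 + (dy v z) ^ 2)) +
              (p : ℝ) ^ (-4 : ℤ) *
                Real.sqrt (∫ z in refTriangle,
                  ((dx (dx v) z) ^ 2 + 2 * (dx (dy v) z) ^ 2 + (dy (dy v) z) ^ 2)) ≤
            c * (p : ℝ) ^ (-1 : ℤ) *
              Real.sqrt (∫ x in Set.Icc (0 : ℝ) 1, (q.eval x) ^ 2) := by
  refine ⟨2 * 1024 + 3, by norm_num, fun p hp q hq => ?_⟩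
  set φ : ℝ[X] := X * (1 - X) * q
  have hmarkov : ∀ r : ℝ[X], r.natDegree ≤ p + 2 →
      unitIntegral (derivative r * derivative r) ≤ 1024 * (p : ℝ) ^ 4 * unitIntegral (r * r) :=
    fun r hr => by
      refine (unitIntegral_derivative_mul_self_le hr).trans
        (mul_le_mul_of_nonneg_right ?_ (unitIntegral_mul_self_nonneg r))
      have h : ((p + 2 : ℕ) + 1 : ℝ) ≤ 4 * p := by
        push_cast
        linarith [(by exact_mod_cast hp : (1 : ℝ) ≤ p)]
      nlinarith [pow_le_pow_left₀ (by positivity) h 4]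
  have hφ : φ.natDegree ≤ p + 2 := (natDegree_bubble_mul_le q).trans (by omega)
  refine ⟨expExtension φ ((p : ℝ) ^ 2), contDiff_expExtension φ _,
    fun x _ => by simp [expExtension, φ], ?_⟩
  calc _ ≤ (2 * 1024 + 3) * (p : ℝ) ^ (-1 : ℤ) * √(unitIntegral (φ * φ)) :=
        energy_expExtension_le φ (by positivity) (by norm_num) (hmarkov φ hφ)
          (hmarkov _ ((natDegree_derivative_le φ).trans (by omega)))
    _ ≤ _ := by
        simp_rw [sq, ← eval_mul, setIntegral_Icc_eq_unitIntegral]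
        gcongr
        exact unitIntegral_bubble_mul_sq_le q
end

section
/- There exists a constant c > 0 such that for every continuously differentiable function v : ℝ² → ℝ, ∫_0^1 (v(x,0)² + v(x,1)² + v(0,y)² + v(1,y)²) ≤ c · ( ∫_S v² + (∫_S v²)^{1/2} · (∫_S ((∂_x v)² + (∂_y v)²))^{1/2} ), where S = [0,1]² (the first integrand is integrated in x for the first two terms and in y for the last two terms). -/
open MeasureTheory

/-- The unit square `S = [0,1]²`. -/
def unitSquare : Set (ℝ × ℝ) := Set.Icc (0 : ℝ) 1 ×ˢ Set.Icc (0 : ℝ) 1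

/-! Along a horizontal line, `v(x, ·)²` varies by at most `∫ |∂_y (v²)| = 2 ∫ |v ∂_y v|`, so each
endpoint value is bounded by the line average of `v²` plus that variation. Integrating in `x`
(Fubini), and doing the same along vertical lines by swapping the coordinates, bounds the boundary
integral by `4 ∫_S v² + 4 ∫_S (|v ∂_x v| + |v ∂_y v|)`; Cauchy–Schwarz bounds each `∫_S |v ∂ v|`
by `‖v‖_{0,S} |v|_{1,S}`, which gives the constant `8`. -/

open Set

theorem integral_abs_mul_le_sqrt_mul_sqrt {α : Type*} [MeasurableSpace α] {μ : Measure α}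
    {f g : α → ℝ} (hf : MemLp f 2 μ) (hg : MemLp g 2 μ) :
    ∫ a, |f a * g a| ∂μ ≤ √(∫ a, f a ^ 2 ∂μ) * √(∫ a, g a ^ 2 ∂μ) := by
  have h := integral_mul_norm_le_Lp_mul_Lq Real.HolderConjugate.two_two
    (by simpa using hf) (by simpa using hg)
  simpa [abs_mul, Real.sqrt_eq_rpow] using h

theorem le_integral_add_integral_abs_deriv {g g' : ℝ → ℝ} {a b t : ℝ}
    (hg : ∀ s, HasDerivAt g (g' s) s) (hg' : Continuous g') (ht : t ∈ Icc a b) :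
    (b - a) * g t ≤ (∫ s in Icc a b, g s) + (b - a) * ∫ s in Icc a b, |g' s| := by
  have hab : a ≤ b := ht.1.trans ht.2
  have hgc : Continuous g := continuous_iff_continuousAt.2 fun s => (hg s).continuousAt
  have hvar : ∀ s ∈ Icc a b, g t ≤ g s + ∫ r in Icc a b, |g' r| := by
    intro s hs
    have hftc : ∫ r in s..t, g' r = g t - g s :=
      intervalIntegral.integral_eq_sub_of_hasDerivAt (fun r _ => hg r) (hg'.intervalIntegrable _ _)
    have hbound : |∫ r in s..t, g' r| ≤ ∫ r in Icc a b, |g' r| := by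
      simpa only [Real.norm_eq_abs] using
        intervalIntegral.norm_integral_le_integral_norm_uIoc.trans <|
          setIntegral_mono_set hg'.norm.integrableOn_Icc (.of_forall fun r => norm_nonneg _)
            (uIoc_subset_uIcc.trans (uIcc_subset_Icc hs ht)).eventuallyLE
    linarith [(abs_le.1 (hftc ▸ hbound)).2]
  calc (b - a) * g t = ∫ _ in Icc a b, g t := by simp [hab]
    _ ≤ ∫ s in Icc a b, (g s + ∫ r in Icc a b, |g' r|) :=
      setIntegral_mono_on (integrableOn_const (by simp))
        (hgc.integrableOn_Icc.add (integrableOn_const (by simp))) measurableSet_Icc hvar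
    _ = _ := by
      rw [integral_add hgc.integrableOn_Icc (integrableOn_const (by simp))]
      simp [hab]

theorem sq_add_sq_le_integral_sq_add_integral_abs_mul_deriv {f f' : ℝ → ℝ} {a b : ℝ}
    (hf : ∀ s, HasDerivAt f (f' s) s) (hf' : Continuous f') (hab : a ≤ b) :
    (b - a) * (f a ^ 2 + f b ^ 2) ≤
      2 * (∫ s in Icc a b, f s ^ 2) + 4 * (b - a) * ∫ s in Icc a b, |f s * f' s| := by
  have hsq : ∀ s, HasDerivAt (fun r => f r ^ 2) (2 * (f s * f' s)) s := fun s => by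
    simpa [mul_assoc] using (hf s).fun_pow 2
  have hcont : Continuous fun s => 2 * (f s * f' s) :=
    continuous_const.mul ((continuous_iff_continuousAt.2 fun s => (hf s).continuousAt).mul hf')
  have ha := le_integral_add_integral_abs_deriv hsq hcont (left_mem_Icc.2 hab)
  have hb := le_integral_add_integral_abs_deriv hsq hcont (right_mem_Icc.2 hab)
  simp only [abs_mul, abs_two, integral_const_mul] at ha hb ⊢
  linarith

theorem isCompact_unitSquare : IsCompact unitSquare := isCompact_Icc.prod isCompact_Icc

theorem Continuous.integrableOn_unitSquare {f : ℝ × ℝ → ℝ} (hf : Continuous f) :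
    IntegrableOn f unitSquare :=
  hf.continuousOn.integrableOn_compact isCompact_unitSquare

theorem volume_restrict_unitSquare :
    volume.restrict unitSquare =
      (volume.restrict (Icc (0 : ℝ) 1)).prod (volume.restrict (Icc 0 1)) := by
  rw [Measure.prod_restrict, ← Measure.volume_eq_prod]; rfl

theorem integral_unitSquare {f : ℝ × ℝ → ℝ} (hf : Continuous f) :
    ∫ z in unitSquare, f z = ∫ x in Icc (0 : ℝ) 1, ∫ y in Icc (0 : ℝ) 1, f (x, y) :=
  setIntegral_prod f hf.integrableOn_unitSquare

theorem integral_unitSquare_comp_swap (f : ℝ × ℝ → ℝ) :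
    ∫ z in unitSquare, f z.swap = ∫ z in unitSquare, f z := by
  rw [volume_restrict_unitSquare]; exact integral_prod_swap f

theorem Continuous.integrableOn_Icc_integral_Icc {f : ℝ × ℝ → ℝ} (hf : Continuous f) :
    IntegrableOn (fun x => ∫ y in Icc (0 : ℝ) 1, f (x, y)) (Icc 0 1) := by
  have : Integrable f ((volume.restrict (Icc (0 : ℝ) 1)).prod (volume.restrict (Icc 0 1))) := by
    rw [← volume_restrict_unitSquare]; exact hf.integrableOn_unitSquare
  exact this.integral_prod_left

theorem Continuous.memLp_two_unitSquare {f : ℝ × ℝ → ℝ} (hf : Continuous f) :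
    MemLp f 2 (volume.restrict unitSquare) :=
  (memLp_two_iff_integrable_sq hf.aestronglyMeasurable).2 (hf.pow 2).integrableOn_unitSquare

section Partials

variable {v : ℝ × ℝ → ℝ}

theorem ContDiff.continuous_dx (hv : ContDiff ℝ 1 v) : Continuous (dx v) :=
  (hv.continuous_fderiv one_ne_zero).clm_apply continuous_const

theorem ContDiff.continuous_dy (hv : ContDiff ℝ 1 v) : Continuous (dy v) :=
  (hv.continuous_fderiv one_ne_zero).clm_apply continuous_const

theorem DifferentiableAt.hasDerivAt_dy {x y : ℝ} (hv : DifferentiableAt ℝ v (x, y)) :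
    HasDerivAt (fun t => v (x, t)) (dy v (x, y)) y :=
  hv.hasFDerivAt.comp_hasDerivAt y ((hasDerivAt_const y x).prodMk (hasDerivAt_id y))

end Partials

theorem dy_comp_swap (v : ℝ × ℝ → ℝ) (z : ℝ × ℝ) : dy (v ∘ Prod.swap) z = dx v z.swap := by
  rw [dy, dx, show v ∘ Prod.swap = v ∘ ContinuousLinearEquiv.prodComm ℝ ℝ ℝ from rfl,
    ContinuousLinearEquiv.comp_right_fderiv]
  rfl

theorem integral_sq_horizontal_edges_le {v : ℝ × ℝ → ℝ} (hv : ContDiff ℝ 1 v) :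
    ∫ x in Icc (0 : ℝ) 1, (v (x, 0) ^ 2 + v (x, 1) ^ 2) ≤
      2 * (∫ z in unitSquare, v z ^ 2) + 4 * ∫ z in unitSquare, |v z * dy v z| := by
  have hsq : Continuous fun z => v z ^ 2 := hv.continuous.pow 2
  have hprod : Continuous fun z => |v z * dy v z| := (hv.continuous.mul hv.continuous_dy).abs
  have hline : ∀ x, v (x, 0) ^ 2 + v (x, 1) ^ 2 ≤
      2 * (∫ y in Icc (0 : ℝ) 1, v (x, y) ^ 2) +
        4 * ∫ y in Icc (0 : ℝ) 1, |v (x, y) * dy v (x, y)| :=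
    fun x => by
      simpa using sq_add_sq_le_integral_sq_add_integral_abs_mul_deriv
        (fun y => (hv.differentiable one_ne_zero (x, y)).hasDerivAt_dy)
        (hv.continuous_dy.comp (continuous_const.prodMk continuous_id)) zero_le_one
  have hsq' := hsq.integrableOn_Icc_integral_Icc.const_mul 2
  have hprod' := hprod.integrableOn_Icc_integral_Icc.const_mul 4
  calc ∫ x in Icc (0 : ℝ) 1, (v (x, 0) ^ 2 + v (x, 1) ^ 2)
      ≤ ∫ x in Icc (0 : ℝ) 1, (2 * (∫ y in Icc (0 : ℝ) 1, v (x, y) ^ 2) +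
          4 * ∫ y in Icc (0 : ℝ) 1, |v (x, y) * dy v (x, y)|) :=
        setIntegral_mono (Continuous.integrableOn_Icc (by fun_prop)) (hsq'.add hprod') hline
    _ = _ := by
      rw [integral_add hsq' hprod', integral_const_mul, integral_const_mul,
        integral_unitSquare hsq, integral_unitSquare hprod]

theorem integral_sq_vertical_edges_le {v : ℝ × ℝ → ℝ} (hv : ContDiff ℝ 1 v) :
    ∫ y in Icc (0 : ℝ) 1, (v (0, y) ^ 2 + v (1, y) ^ 2) ≤
      2 * (∫ z in unitSquare, v z ^ 2) + 4 * ∫ z in unitSquare, |v z * dx v z| := by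
  have h := integral_sq_horizontal_edges_le
    (show ContDiff ℝ 1 (v ∘ Prod.swap) from hv.comp (contDiff_snd.prodMk contDiff_fst))
  simp only [Function.comp_apply, dy_comp_swap] at h
  rwa [integral_unitSquare_comp_swap (fun z => v z ^ 2),
    integral_unitSquare_comp_swap (fun z => |v z * dx v z|)] at h

/-- the trace inequality
`‖v‖²_{0,∂ω} ≤ c (h⁻¹‖v‖²_{0,ω} + ‖v‖_{0,ω}|v|_{1,ω})` (Proposition 3.1 of
the paper) specialized to the unit square (h = 1) and continuously
differentiable functions. -/
theorem trace_inequality_unit_square :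
    ∃ c : ℝ, 0 < c ∧
      ∀ v : ℝ × ℝ → ℝ, ContDiff ℝ 1 v →
        (∫ x in Set.Icc (0 : ℝ) 1, ((v (x, 0)) ^ 2 + (v (x, 1)) ^ 2)) +
            (∫ y in Set.Icc (0 : ℝ) 1, ((v (0, y)) ^ 2 + (v (1, y)) ^ 2)) ≤
          c * ((∫ z in unitSquare, (v z) ^ 2) +
            Real.sqrt (∫ z in unitSquare, (v z) ^ 2) *
              Real.sqrt (∫ z in unitSquare, ((dx v z) ^ 2 + (dy v z) ^ 2))) := by
  refine ⟨8, by norm_num, fun v hv => ?_⟩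
  set A := ∫ z in unitSquare, v z ^ 2
  set B := ∫ z in unitSquare, (dx v z ^ 2 + dy v z ^ 2)
  have hA : 0 ≤ A := setIntegral_nonneg isCompact_unitSquare.measurableSet fun z _ => sq_nonneg _
  have hgrad : Continuous fun z => dx v z ^ 2 + dy v z ^ 2 :=
    (hv.continuous_dx.pow 2).add (hv.continuous_dy.pow 2)
  have hCS : ∀ w : ℝ × ℝ → ℝ, Continuous w → (∀ z, w z ^ 2 ≤ dx v z ^ 2 + dy v z ^ 2) →
      ∫ z in unitSquare, |v z * w z| ≤ √A * √B := fun w hw hle =>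
    (integral_abs_mul_le_sqrt_mul_sqrt hv.continuous.memLp_two_unitSquare
      hw.memLp_two_unitSquare).trans <| mul_le_mul_of_nonneg_left (Real.sqrt_le_sqrt <|
        integral_mono (hw.pow 2).integrableOn_unitSquare hgrad.integrableOn_unitSquare hle)
      (Real.sqrt_nonneg _)
  have hx := hCS (dx v) hv.continuous_dx fun z => le_add_of_nonneg_right (sq_nonneg _)
  have hy := hCS (dy v) hv.continuous_dy fun z => le_add_of_nonneg_left (sq_nonneg _)
  linarith [integral_sq_horizontal_edges_le hv, integral_sq_vertical_edges_le hv]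
end
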